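/- arXiv:math/0505461 — 2 statements merged into one kernel-verified Lean document; each statement's English description precedes it below -/
import Mathlib

section
/- Let Ω be a Lipschitz graph domain with Lipschitz constant M and let ε > −1. Then there are constants 0 < c ≤ C, depending only on ε and M, such that for every x ∈ ∂Ω and every r > 0, c · r · max(|x|, r)^ε ≤ σ_ε(Δ_r(x)) ≤ C · r · max(|x|, r)^ε. -/
open MeasureTheory Filter Set
open scoped ENNReal Topology Real NNReal

noncomputable section

/-- Parametrization of the graph `t ↦ (t, φ t)`, as a point of `ℂ ≃ ℝ²`. -/
def bmap (φ : ℝ → ℝ) (t : ℝ) : ℂ := ⟨t, φ t⟩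

/-- The Lipschitz graph domain `Ω = {(x₁,x₂) : x₂ > φ(x₁)}`. -/
def gDomain (φ : ℝ → ℝ) : Set ℂ := {z : ℂ | φ z.re < z.im}

/-- The boundary `∂Ω` of the graph domain. -/
def gBdry (φ : ℝ → ℝ) : Set ℂ := {z : ℂ | z.im = φ z.re}

/-- The Dirichlet portion `D = {(x₁, φ x₁) : x₁ < 0}` of the boundary. -/
def Dside (φ : ℝ → ℝ) : Set ℂ := {z : ℂ | z.im = φ z.re ∧ z.re < 0}

/-- The Neumann portion `N = {(x₁, φ x₁) : x₁ ≥ 0}` of the boundary. -/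
def Nside (φ : ℝ → ℝ) : Set ℂ := {z : ℂ | z.im = φ z.re ∧ 0 ≤ z.re}

/-- Arc length measure `dσ` on `∂Ω`: the pushforward of `√(1+φ'(t)²) dt`. -/
def sigma0 (φ : ℝ → ℝ) : Measure ℂ :=
  Measure.map (bmap φ)
    (volume.withDensity fun t => ENNReal.ofReal (Real.sqrt (1 + deriv φ t ^ 2)))

/-- Weighted arc length `dσ_ε = |x|^ε dσ` on `∂Ω`. -/
def sigmaW (φ : ℝ → ℝ) (ε : ℝ) : Measure ℂ :=
  (sigma0 φ).withDensity fun x => ENNReal.ofReal (‖x‖ ^ ε)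

/-- The open cone `x + {r e^{iθ} : r > 0, |θ - π/2| < θ₀}` with vertex `x`. -/
def ntCone (θ₀ : ℝ) (x : ℂ) : Set ℂ :=
  {z : ℂ | z ≠ x ∧ |Complex.arg (z - x) - π / 2| < θ₀}

/-- The nontangential approach region `Γ(x) ∩ Ω`. -/
def ntRegion (φ : ℝ → ℝ) (θ₀ : ℝ) (x : ℂ) : Set ℂ := ntCone θ₀ x ∩ gDomain φ

/-- The nontangential maximal function `v*(x) = sup_{y ∈ Γ(x)} v(y)` (for `v ≥ 0`),
valued in `ℝ≥0∞`. -/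
def ntMax (φ : ℝ → ℝ) (θ₀ : ℝ) (v : ℂ → ℝ) (x : ℂ) : ℝ≥0∞ :=
  ⨆ y ∈ ntRegion φ θ₀ x, ENNReal.ofReal (v y)

/-- Nontangential limit of `v` at the boundary point `x`. -/
def NTLim (φ : ℝ → ℝ) (θ₀ : ℝ) {α : Type*} [TopologicalSpace α]
    (v : ℂ → α) (x : ℂ) (c : α) : Prop :=
  Filter.Tendsto v (nhdsWithin x (ntRegion φ θ₀ x)) (nhds c)

/-- Gradient of `u : ℂ → ℝ`, written as a point of `ℂ ≃ ℝ²`. -/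
def grad (u : ℂ → ℝ) (z : ℂ) : ℂ := ⟨fderiv ℝ u z 1, fderiv ℝ u z Complex.I⟩

/-- Euclidean dot product on `ℂ ≃ ℝ²`. -/
def dotR (a b : ℂ) : ℝ := a.re * b.re + a.im * b.im

/-- Laplacian of `u : ℂ → ℝ`. -/
def lap (u : ℂ → ℝ) (z : ℂ) : ℝ :=
  fderiv ℝ (fun w => fderiv ℝ u w 1) z 1 + fderiv ℝ (fun w => fderiv ℝ u w Complex.I) z Complex.I

/-- Divergence of the vector field `F : ℂ → ℂ ≃ ℝ²`. -/
def divg (F : ℂ → ℂ) (z : ℂ) : ℝ :=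
  fderiv ℝ (fun w => (F w).re) z 1 + fderiv ℝ (fun w => (F w).im) z Complex.I

/-- `u` is harmonic on `s`. -/
def HarmOn (u : ℂ → ℝ) (s : Set ℂ) : Prop :=
  ContDiffOn ℝ 2 u s ∧ ∀ z ∈ s, lap u z = 0

/-- Outer unit normal `ν = (φ'(x₁), -1)/√(1+φ'(x₁)²)` at a boundary point. -/
def nuVec (φ : ℝ → ℝ) (x : ℂ) : ℂ :=
  (Real.sqrt (1 + deriv φ x.re ^ 2))⁻¹ • (⟨deriv φ x.re, -1⟩ : ℂ)

/-- Unit tangent `T = (1, φ'(x₁))/√(1+φ'(x₁)²)` at a boundary point. -/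
def tanVec (φ : ℝ → ℝ) (x : ℂ) : ℂ :=
  (Real.sqrt (1 + deriv φ x.re ^ 2))⁻¹ • (⟨1, deriv φ x.re⟩ : ℂ)

/-- Branch of the argument with values in `(-π/2, 3π/2]`. -/
def argB (z : ℂ) : ℝ :=
  if Complex.arg z < -(π / 2) then Complex.arg z + 2 * π else Complex.arg z

/-- The branch `z^ε = r^ε e^{iεθ}`, `θ ∈ (-π/2, 3π/2]`, of the complex power,
holomorphic off the closed negative imaginary axis. -/
def cpowB (ε : ℝ) (z : ℂ) : ℂ :=
  ((‖z‖ ^ ε : ℝ) : ℂ) * Complex.exp (Complex.I * ((ε * argB z : ℝ) : ℂ))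

/-- `h` is the arc-length derivative `df/dσ` of `f` along the part of the boundary
parametrized by `t ∈ S`. -/
def HasArcDeriv (φ : ℝ → ℝ) (f h : ℂ → ℝ) (S : Set ℝ) : Prop :=
  ∀ t₁ ∈ S, ∀ t₂ ∈ S,
    IntervalIntegrable (fun t => h (bmap φ t) * Real.sqrt (1 + deriv φ t ^ 2)) volume t₁ t₂ ∧
    f (bmap φ t₂) - f (bmap φ t₁) = ∫ t in t₁..t₂, h (bmap φ t) * Real.sqrt (1 + deriv φ t ^ 2)

/-- Membership in `L^p(S, μ)`. -/
def MemLpB (p : ℝ) (μ : Measure ℂ) (S : Set ℂ) (f : ℂ → ℝ) : Prop :=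
  AEMeasurable f (μ.restrict S) ∧ (∫⁻ x in S, ENNReal.ofReal |f x| ^ p ∂μ) < ⊤

/-- The `L^p(S, μ)` norm. -/
def lpN (p : ℝ) (μ : Measure ℂ) (S : Set ℂ) (f : ℂ → ℝ) : ℝ≥0∞ :=
  (∫⁻ x in S, ENNReal.ofReal |f x| ^ p ∂μ) ^ (1 / p)

/-- The `L^p(μ)` norm of the nontangential maximal function of `v`. -/
def ntMaxLp (φ : ℝ → ℝ) (θ₀ p : ℝ) (μ : Measure ℂ) (v : ℂ → ℝ) : ℝ≥0∞ :=
  (∫⁻ x, ntMax φ θ₀ v x ^ p ∂μ) ^ (1 / p)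

/-- `u` solves the mixed problem for `L^p(μ)` with Dirichlet data `fD` on `D` and
Neumann data `fN` on `N`. -/
def MixedSol (φ : ℝ → ℝ) (θ₀ p : ℝ) (μ : Measure ℂ) (fD fN : ℂ → ℝ) (u : ℂ → ℝ) : Prop :=
  HarmOn u (gDomain φ) ∧
  (∀ᵐ x ∂(sigma0 φ), x ∈ Dside φ → NTLim φ θ₀ u x (fD x)) ∧
  (∃ g : ℂ → ℂ, (∀ᵐ x ∂(sigma0 φ), NTLim φ θ₀ (grad u) x (g x)) ∧
      ∀ᵐ x ∂(sigma0 φ), x ∈ Nside φ → dotR (g x) (nuVec φ x) = fN x) ∧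
  (∫⁻ x, ntMax φ θ₀ (fun y => ‖grad u y‖) x ^ p ∂μ) < ⊤

/-- `u` solves the Neumann problem for `L^p(μ)` with data `f`. -/
def NeumannSol (φ : ℝ → ℝ) (θ₀ p : ℝ) (μ : Measure ℂ) (f : ℂ → ℝ) (u : ℂ → ℝ) : Prop :=
  HarmOn u (gDomain φ) ∧
  (∃ g : ℂ → ℂ, (∀ᵐ x ∂(sigma0 φ), NTLim φ θ₀ (grad u) x (g x)) ∧
      ∀ᵐ x ∂(sigma0 φ), dotR (g x) (nuVec φ x) = f x) ∧
  (∫⁻ x, ntMax φ θ₀ (fun y => ‖grad u y‖) x ^ p ∂μ) < ⊤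

/-- `u` solves the regularity problem for `L^p(μ)` with data `f`. -/
def RegSol (φ : ℝ → ℝ) (θ₀ p : ℝ) (μ : Measure ℂ) (f : ℂ → ℝ) (u : ℂ → ℝ) : Prop :=
  HarmOn u (gDomain φ) ∧
  (∀ᵐ x ∂(sigma0 φ), NTLim φ θ₀ u x (f x)) ∧
  (∃ g : ℂ → ℂ, ∀ᵐ x ∂(sigma0 φ), NTLim φ θ₀ (grad u) x (g x)) ∧
  (∫⁻ x, ntMax φ θ₀ (fun y => ‖grad u y‖) x ^ p ∂μ) < ⊤

/-- An `H¹(dσ_ε)`-atom. -/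
def H1Atom (φ : ℝ → ℝ) (ε : ℝ) (a : ℂ → ℝ) : Prop :=
  ∃ x ∈ gBdry φ, ∃ s : ℝ, 0 < s ∧
    (∀ y, y ∉ Metric.ball x s ∩ gBdry φ → a y = 0) ∧
    (∫ y, a y ∂(sigma0 φ)) = 0 ∧
    ∀ y, |a y| ≤ ((sigmaW φ ε (Metric.ball x s ∩ gBdry φ)).toReal)⁻¹

/-- An atomic representation `f = Σ λ_j a_j` (convergence in `L¹(dσ_ε)`). -/
def H1Rep (φ : ℝ → ℝ) (ε : ℝ) (f : ℂ → ℝ) (lam : ℕ → ℝ) (a : ℕ → ℂ → ℝ) : Prop :=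
  (∀ j, H1Atom φ ε (a j)) ∧ Summable (fun j => |lam j|) ∧
  Filter.Tendsto
    (fun n => ∫⁻ x, ENNReal.ofReal |f x - ∑ j ∈ Finset.range n, lam j * a j x| ∂(sigmaW φ ε))
    Filter.atTop (nhds 0)

def MemH1 (φ : ℝ → ℝ) (ε : ℝ) (f : ℂ → ℝ) : Prop := ∃ lam a, H1Rep φ ε f lam a

def H1norm (φ : ℝ → ℝ) (ε : ℝ) (f : ℂ → ℝ) : ℝ≥0∞ :=
  sInf {c | ∃ lam a, H1Rep φ ε f lam a ∧ c = ∑' j, ENNReal.ofReal |lam j|}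

/-- An `H^{1,1}(dσ_ε)`-atom: an indefinite arc-length integral of an `H¹(dσ_ε)`-atom. -/
def H11Atom (φ : ℝ → ℝ) (ε : ℝ) (A : ℂ → ℝ) : Prop :=
  ∃ a, H1Atom φ ε a ∧ ∃ t₀ : ℝ, ∀ t : ℝ,
    A (bmap φ t) = ∫ s in t₀..t, a (bmap φ s) * Real.sqrt (1 + deriv φ s ^ 2)

def H11Rep (φ : ℝ → ℝ) (ε : ℝ) (F : ℂ → ℝ) (lam : ℕ → ℝ) (A : ℕ → ℂ → ℝ) : Prop :=
  (∀ j, H11Atom φ ε (A j)) ∧ Summable (fun j => |lam j|) ∧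
  ∀ᵐ x ∂(sigma0 φ), HasSum (fun j => lam j * A j x) (F x)

def MemH11 (φ : ℝ → ℝ) (ε : ℝ) (F : ℂ → ℝ) : Prop := ∃ lam A, H11Rep φ ε F lam A

def H11norm (φ : ℝ → ℝ) (ε : ℝ) (F : ℂ → ℝ) : ℝ≥0∞ :=
  sInf {c | ∃ lam A, H11Rep φ ε F lam A ∧ c = ∑' j, ENNReal.ofReal |lam j|}

/-- Membership in `H¹(S, dσ_ε)`: restriction to `S` of an element of `H¹(dσ_ε)`. -/
def MemH1On (φ : ℝ → ℝ) (ε : ℝ) (S : Set ℂ) (f : ℂ → ℝ) : Prop :=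
  ∃ g, MemH1 φ ε g ∧ Set.EqOn f g S

def H1normOn (φ : ℝ → ℝ) (ε : ℝ) (S : Set ℂ) (f : ℂ → ℝ) : ℝ≥0∞ :=
  sInf {c | ∃ g lam a, H1Rep φ ε g lam a ∧ Set.EqOn f g S ∧ c = ∑' j, ENNReal.ofReal |lam j|}

def MemH11On (φ : ℝ → ℝ) (ε : ℝ) (S : Set ℂ) (F : ℂ → ℝ) : Prop :=
  ∃ G, MemH11 φ ε G ∧ Set.EqOn F G S

def H11normOn (φ : ℝ → ℝ) (ε : ℝ) (S : Set ℂ) (F : ℂ → ℝ) : ℝ≥0∞ :=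
  sInf {c | ∃ G lam A, H11Rep φ ε G lam A ∧ Set.EqOn F G S ∧ c = ∑' j, ENNReal.ofReal |lam j|}

/-- An `H¹(N, dσ_ε)`-atom: the restriction to `N` of an `H¹(dσ_ε)`-atom. -/
def H1AtomN (φ : ℝ → ℝ) (ε : ℝ) (a : ℂ → ℝ) : Prop :=
  ∃ b, H1Atom φ ε b ∧ Set.EqOn a b (Nside φ)

/-! Parametrize `∂Ω` by `γ t = (t, φ t)`. Then `|t - s| ≤ |γ t - γ s| ≤ K |t - s|` with
`K = √(1 + M²)`, and the arc-length density `√(1 + φ'²)` lies in `[1, K]`; since `φ 0 = 0`,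
also `|t| ≤ |γ t| ≤ K |t|`. Hence the pullback of `σ_ε` is comparable to `|t|^ε dt`, and
`Δ_r(γ s)` pulls back to a set squeezed between the intervals of radii `r / K` and `r` about `s`.
It remains to see that `∫_{s-r}^{s+r} |t|^ε dt ≈ r · max(|s|, r)^ε`: for `|s| ≥ 2r` the weight is
comparable to `|s|^ε` on the whole interval, while for `|s| < 2r` the interval lies in
`(-3r, 3r)`, over which the integral is `2 (3r)^(ε+1) / (ε + 1)` because `ε > -1`. -/

theorem rpow_le_rpow_abs_mul_rpow {K a b : ℝ} (hK : 1 ≤ K) (ha : 0 ≤ a) (hb : 0 ≤ b)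
    (hab : a ≤ K * b) (hba : b ≤ K * a) (ε : ℝ) : a ^ ε ≤ K ^ |ε| * b ^ ε := by
  have hK0 : 0 < K := zero_lt_one.trans_le hK
  rcases ha.eq_or_lt with rfl | ha
  · obtain rfl : b = 0 := by linarith
    exact le_mul_of_one_le_left (Real.rpow_nonneg le_rfl ε) (Real.one_le_rpow hK (abs_nonneg ε))
  rcases le_or_gt 0 ε with hε | hε
  · calc a ^ ε ≤ (K * b) ^ ε := Real.rpow_le_rpow ha.le hab hε
      _ = K ^ |ε| * b ^ ε := by rw [Real.mul_rpow hK0.le hb, abs_of_nonneg hε]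
  · have hb0 : 0 < b := pos_of_mul_pos_right (ha.trans_le hab) hK0.le
    calc a ^ ε ≤ (b / K) ^ ε :=
          Real.rpow_le_rpow_of_nonpos (div_pos hb0 hK0) ((div_le_iff₀ hK0).2 (by linarith)) hε.le
      _ = K ^ |ε| * b ^ ε := by
          rw [Real.div_rpow hb hK0.le, abs_of_neg hε, Real.rpow_neg hK0.le, div_eq_inv_mul]

theorem rpow_neg_abs_mul_rpow_le {K a b : ℝ} (hK : 1 ≤ K) (ha : 0 ≤ a) (hb : 0 ≤ b)
    (hab : a ≤ K * b) (hba : b ≤ K * a) (ε : ℝ) : K ^ (-|ε|) * a ^ ε ≤ b ^ ε := by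
  rw [Real.rpow_neg (by linarith), inv_mul_le_iff₀ (by positivity)]
  exact rpow_le_rpow_abs_mul_rpow hK ha hb hab hba ε

theorem one_le_sqrt_one_add_sq (a : ℝ) : 1 ≤ √(1 + a ^ 2) :=
  Real.one_le_sqrt.2 (by nlinarith)

theorem max_le_mul_max {K a b c d : ℝ} (hK : 0 ≤ K) (hab : a ≤ K * b) (hcd : c ≤ K * d) :
    max a c ≤ K * max b d := by
  rw [mul_max_of_nonneg _ _ hK]
  exact max_le_max hab hcd

def absRpowVolume (ε : ℝ) : Measure ℝ :=
  volume.withDensity fun t => ENNReal.ofReal (|t| ^ ε)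

namespace absRpowVolume

theorem apply_neg (ε : ℝ) (A : Set ℝ) : absRpowVolume ε (-A) = absRpowVolume ε A := by
  rw [absRpowVolume, withDensity_apply', withDensity_apply', ← Set.neg_preimage]
  simpa only [abs_neg] using (Measure.measurePreserving_neg volume).setLIntegral_comp_preimage_emb
    (Homeomorph.neg ℝ).measurableEmbedding (fun t => ENNReal.ofReal (|t| ^ ε)) A

theorem ofReal_mul_volume_le {ε : ℝ} {S : Set ℝ} {v : ℝ} (hv : ∀ t ∈ S, v ≤ |t| ^ ε) :
    ENNReal.ofReal v * volume S ≤ absRpowVolume ε S := by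
  rw [absRpowVolume, withDensity_apply' _ S, ← setLIntegral_const]
  exact setLIntegral_mono (by fun_prop) fun t ht => ENNReal.ofReal_le_ofReal (hv t ht)

theorem le_ofReal_mul_volume {ε : ℝ} {S : Set ℝ} {v : ℝ} (hv : ∀ t ∈ S, |t| ^ ε ≤ v) :
    absRpowVolume ε S ≤ ENNReal.ofReal v * volume S := by
  rw [absRpowVolume, withDensity_apply' _ S, ← setLIntegral_const]
  exact setLIntegral_mono measurable_const fun t ht => ENNReal.ofReal_le_ofReal (hv t ht)

theorem Ioo_zero {ε : ℝ} (hε : -1 < ε) {a : ℝ} (ha : 0 < a) :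
    absRpowVolume ε (Ioo 0 a) = ENNReal.ofReal (a ^ (ε + 1) / (ε + 1)) := by
  have hint : IntegrableOn (fun t : ℝ => |t| ^ ε) (Ioo 0 a) := by
    refine ((intervalIntegral.integrableOn_Ioo_rpow_iff ha).2 hε).congr_fun
      (fun t ht => ?_) measurableSet_Ioo
    simp [abs_of_pos ht.1]
  rw [absRpowVolume, withDensity_apply _ measurableSet_Ioo,
    ← ofReal_integral_eq_lintegral_ofReal hint (Filter.Eventually.of_forall fun t => by positivity),
    setIntegral_congr_fun measurableSet_Ioo (g := fun t => t ^ ε)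
      (fun t ht => by simp [abs_of_pos ht.1]),
    ← integral_Ioc_eq_integral_Ioo, ← intervalIntegral.integral_of_le ha.le,
    integral_rpow (Or.inl hε), Real.zero_rpow (by linarith), sub_zero]

theorem Ioo_neg_self_le {ε : ℝ} (hε : -1 < ε) {a : ℝ} (ha : 0 < a) :
    absRpowVolume ε (Ioo (-a) a) ≤ ENNReal.ofReal (2 * (a ^ (ε + 1) / (ε + 1))) := by
  have hzero : absRpowVolume ε {0} = 0 :=
    withDensity_absolutelyContinuous _ _ (measure_singleton 0)
  have hcover : Ioo (-a) a ⊆ -Ioo 0 a ∪ ({0} ∪ Ioo 0 a) := by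
    intro t ⟨h₁, h₂⟩
    rcases lt_trichotomy t 0 with h | rfl | h
    · exact Or.inl ⟨neg_pos.2 h, by linarith⟩
    · exact Or.inr (Or.inl rfl)
    · exact Or.inr (Or.inr ⟨h, h₂⟩)
  have hpos : 0 ≤ a ^ (ε + 1) / (ε + 1) := div_nonneg (by positivity) (by linarith)
  calc absRpowVolume ε (Ioo (-a) a)
      ≤ absRpowVolume ε (-Ioo 0 a) + (absRpowVolume ε {0} + absRpowVolume ε (Ioo 0 a)) :=
        (measure_mono hcover).trans
          ((measure_union_le _ _).trans (add_le_add_right (measure_union_le _ _) _))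
    _ = ENNReal.ofReal (2 * (a ^ (ε + 1) / (ε + 1))) := by
        rw [apply_neg, hzero, zero_add, Ioo_zero hε ha, ← ENNReal.ofReal_add hpos hpos, two_mul]

theorem Ioo_abs (ε s r : ℝ) :
    absRpowVolume ε (Ioo (s - r) (s + r)) = absRpowVolume ε (Ioo (|s| - r) (|s| + r)) := by
  rcases le_or_gt 0 s with hs | hs
  · rw [abs_of_nonneg hs]
  · rw [abs_of_neg hs, ← apply_neg, Set.neg_Ioo]
    congr 2 <;> ring

theorem ofReal_le_Ioo (ε s : ℝ) {r : ℝ} (hr : 0 < r) :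
    ENNReal.ofReal (2 ^ (-|ε|) / 2 * (r * max |s| r ^ ε)) ≤
      absRpowVolume ε (Ioo (s - r) (s + r)) := by
  rw [Ioo_abs]
  set X := max |s| r
  have hcomp : ∀ t ∈ Ioo (|s| + r / 2) (|s| + r), 2 ^ (-|ε|) * X ^ ε ≤ |t| ^ ε := by
    intro t ⟨h₁, h₂⟩
    have ht : 0 < t := by linarith [abs_nonneg s]
    rw [abs_of_pos ht]
    exact rpow_neg_abs_mul_rpow_le one_le_two (by positivity) ht.le
      (max_le (by linarith) (by linarith [abs_nonneg s]))
      (by linarith [le_max_left |s| r, le_max_right |s| r]) ε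
  calc ENNReal.ofReal (2 ^ (-|ε|) / 2 * (r * X ^ ε))
      = ENNReal.ofReal (2 ^ (-|ε|) * X ^ ε) * volume (Ioo (|s| + r / 2) (|s| + r)) := by
        rw [Real.volume_Ioo, ← ENNReal.ofReal_mul (by positivity)]
        ring_nf
    _ ≤ absRpowVolume ε (Ioo (|s| + r / 2) (|s| + r)) := ofReal_mul_volume_le hcomp
    _ ≤ absRpowVolume ε (Ioo (|s| - r) (|s| + r)) :=
        measure_mono (Ioo_subset_Ioo (by linarith) le_rfl)

theorem Ioo_le_ofReal {ε : ℝ} (hε : -1 < ε) (s : ℝ) {r : ℝ} (hr : 0 < r) :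
    absRpowVolume ε (Ioo (s - r) (s + r)) ≤
      ENNReal.ofReal (max (2 * 2 ^ |ε|) (6 * 3 ^ |ε| / (ε + 1)) * (r * max |s| r ^ ε)) := by
  rw [Ioo_abs]
  have hs := abs_nonneg s
  set u := |s|
  rcases le_or_gt (2 * r) u with hfar | hnear
  · have hX : max u r = u := max_eq_left (by linarith)
    have hcomp : ∀ t ∈ Ioo (u - r) (u + r), |t| ^ ε ≤ 2 ^ |ε| * u ^ ε := by
      intro t ⟨h₁, h₂⟩
      rw [abs_of_pos (by linarith)]
      exact rpow_le_rpow_abs_mul_rpow one_le_two (by linarith) hs (by linarith) (by linarith) ε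
    calc absRpowVolume ε (Ioo (u - r) (u + r))
        ≤ ENNReal.ofReal (2 ^ |ε| * u ^ ε) * volume (Ioo (u - r) (u + r)) :=
          le_ofReal_mul_volume hcomp
      _ = ENNReal.ofReal (2 * 2 ^ |ε| * (r * max u r ^ ε)) := by
        rw [Real.volume_Ioo, ← ENNReal.ofReal_mul (by positivity), hX]
        ring_nf
      _ ≤ _ := ENNReal.ofReal_le_ofReal
        (mul_le_mul_of_nonneg_right (le_max_left _ _) (by positivity))
  · have hcomp : (3 * r) ^ ε ≤ 3 ^ |ε| * max u r ^ ε :=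
      rpow_le_rpow_abs_mul_rpow (by norm_num) (by positivity) (by positivity)
        (by linarith [le_max_right u r]) (max_le (by linarith) (by linarith)) ε
    calc absRpowVolume ε (Ioo (u - r) (u + r))
        ≤ absRpowVolume ε (Ioo (-(3 * r)) (3 * r)) :=
          measure_mono (Ioo_subset_Ioo (by linarith) (by linarith))
      _ ≤ ENNReal.ofReal (2 * ((3 * r) ^ (ε + 1) / (ε + 1))) := Ioo_neg_self_le hε (by positivity)
      _ ≤ _ := by
        refine ENNReal.ofReal_le_ofReal ?_
        have hε1 : 0 < ε + 1 := by linarith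
        calc 2 * ((3 * r) ^ (ε + 1) / (ε + 1)) = 6 / (ε + 1) * r * (3 * r) ^ ε := by
              rw [Real.rpow_add (by positivity), Real.rpow_one]; ring
          _ ≤ 6 / (ε + 1) * r * (3 ^ |ε| * max u r ^ ε) := by gcongr
          _ = 6 * 3 ^ |ε| / (ε + 1) * (r * max u r ^ ε) := by ring
          _ ≤ _ := mul_le_mul_of_nonneg_right (le_max_right _ _) (by positivity)

end absRpowVolume

section Graph

variable {φ : ℝ → ℝ} {L : ℝ≥0}

theorem continuous_bmap (hφ : Continuous φ) : Continuous (bmap φ) :=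
  Complex.equivRealProdCLM.symm.continuous.comp (continuous_id.prodMk hφ)

theorem abs_sub_le_norm_bmap_sub (φ : ℝ → ℝ) (s t : ℝ) : |t - s| ≤ ‖bmap φ t - bmap φ s‖ :=
  Complex.abs_re_le_norm (bmap φ t - bmap φ s)

theorem norm_bmap_sub_le (hφ : LipschitzWith L φ) (s t : ℝ) :
    ‖bmap φ t - bmap φ s‖ ≤ √(1 + (L : ℝ) ^ 2) * |t - s| := by
  have him : |φ t - φ s| ≤ L * |t - s| := by simpa only [Real.dist_eq] using hφ.dist_le_mul t s
  have him2 : (φ t - φ s) ^ 2 ≤ L ^ 2 * (t - s) ^ 2 := by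
    rw [← sq_abs, ← sq_abs (t - s), ← mul_pow]
    exact pow_le_pow_left₀ (abs_nonneg _) him 2
  rw [← pow_le_pow_iff_left₀ (norm_nonneg _) (by positivity) two_ne_zero, Complex.sq_norm,
    Complex.normSq_apply, mul_pow, Real.sq_sqrt (by positivity), sq_abs]
  change (t - s) * (t - s) + (φ t - φ s) * (φ t - φ s) ≤ _
  nlinarith

theorem sqrt_one_add_deriv_sq_le (hφ : LipschitzWith L φ) (t : ℝ) :
    √(1 + deriv φ t ^ 2) ≤ √(1 + (L : ℝ) ^ 2) := by
  have h := norm_deriv_le_of_lipschitz (x₀ := t) hφ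
  rw [Real.norm_eq_abs] at h
  gcongr √(1 + ?_)
  rw [← sq_abs]
  exact pow_le_pow_left₀ (abs_nonneg _) h 2

def sigmaWPullback (φ : ℝ → ℝ) (ε : ℝ) : Measure ℝ :=
  volume.withDensity fun t => ENNReal.ofReal (√(1 + deriv φ t ^ 2) * ‖bmap φ t‖ ^ ε)

theorem sigmaW_eq_map (hφ : Continuous φ) (ε : ℝ) :
    sigmaW φ ε = (sigmaWPullback φ ε).map (bmap φ) := by
  have hb : Measurable (bmap φ) := (continuous_bmap hφ).measurable
  have hnorm : Measurable fun x : ℂ => ENNReal.ofReal (‖x‖ ^ ε) := by fun_prop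
  have hnorm_b : Measurable fun t => ENNReal.ofReal (‖bmap φ t‖ ^ ε) := hnorm.comp hb
  have hdens : Measurable fun t => ENNReal.ofReal √(1 + deriv φ t ^ 2) := by
    have := measurable_deriv φ
    fun_prop
  ext B hB
  rw [sigmaW, withDensity_apply _ hB, sigma0, setLIntegral_map hB hnorm hb,
    restrict_withDensity (hb hB), lintegral_withDensity_eq_lintegral_mul _ hdens hnorm_b,
    Measure.map_apply hb hB, sigmaWPullback, withDensity_apply _ (hb hB)]
  refine lintegral_congr fun t => ?_
  simp only [Pi.mul_apply]
  rw [ENNReal.ofReal_mul (Real.sqrt_nonneg _)]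

theorem abs_le_norm_bmap (hφ0 : φ 0 = 0) (t : ℝ) : |t| ≤ ‖bmap φ t‖ := by
  have hb0 : bmap φ 0 = 0 := Complex.ext rfl hφ0
  simpa [hb0] using abs_sub_le_norm_bmap_sub φ 0 t

theorem norm_bmap_le (hφ : LipschitzWith L φ) (hφ0 : φ 0 = 0) (t : ℝ) :
    ‖bmap φ t‖ ≤ √(1 + (L : ℝ) ^ 2) * |t| := by
  have hb0 : bmap φ 0 = 0 := Complex.ext rfl hφ0
  simpa [hb0] using norm_bmap_sub_le hφ 0 t

theorem smul_absRpowVolume_le_sigmaWPullback (hφ : LipschitzWith L φ) (hφ0 : φ 0 = 0) (ε : ℝ) :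
    ENNReal.ofReal (√(1 + (L : ℝ) ^ 2) ^ (-|ε|)) • absRpowVolume ε ≤ sigmaWPullback φ ε := by
  rw [absRpowVolume, sigmaWPullback, ← withDensity_smul' _ _ ENNReal.ofReal_ne_top]
  refine withDensity_mono (Eventually.of_forall fun t => ?_)
  rw [Pi.smul_apply, smul_eq_mul, ← ENNReal.ofReal_mul (by positivity)]
  refine ENNReal.ofReal_le_ofReal ?_
  calc √(1 + (L : ℝ) ^ 2) ^ (-|ε|) * |t| ^ ε ≤ ‖bmap φ t‖ ^ ε :=
        rpow_neg_abs_mul_rpow_le (one_le_sqrt_one_add_sq _) (abs_nonneg t) (norm_nonneg _)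
          ((abs_le_norm_bmap hφ0 t).trans
            (le_mul_of_one_le_left (norm_nonneg _) (one_le_sqrt_one_add_sq _)))
          (norm_bmap_le hφ hφ0 t) ε
    _ ≤ √(1 + deriv φ t ^ 2) * ‖bmap φ t‖ ^ ε :=
        le_mul_of_one_le_left (by positivity) (one_le_sqrt_one_add_sq _)

theorem sigmaWPullback_le_smul_absRpowVolume (hφ : LipschitzWith L φ) (hφ0 : φ 0 = 0) (ε : ℝ) :
    sigmaWPullback φ ε ≤
      ENNReal.ofReal (√(1 + (L : ℝ) ^ 2) * √(1 + (L : ℝ) ^ 2) ^ |ε|) • absRpowVolume ε := by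
  rw [absRpowVolume, sigmaWPullback, ← withDensity_smul' _ _ ENNReal.ofReal_ne_top]
  refine withDensity_mono (Eventually.of_forall fun t => ?_)
  rw [Pi.smul_apply, smul_eq_mul, ← ENNReal.ofReal_mul (by positivity), mul_assoc]
  refine ENNReal.ofReal_le_ofReal (mul_le_mul (sqrt_one_add_deriv_sq_le hφ t) ?_ (by positivity)
    (by positivity))
  exact rpow_le_rpow_abs_mul_rpow (one_le_sqrt_one_add_sq _) (norm_nonneg _) (abs_nonneg t)
    (norm_bmap_le hφ hφ0 t) ((abs_le_norm_bmap hφ0 t).trans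
      (le_mul_of_one_le_left (norm_nonneg _) (one_le_sqrt_one_add_sq _))) ε

theorem preimage_ball_inter_gBdry_subset_Ioo (φ : ℝ → ℝ) (s r : ℝ) :
    bmap φ ⁻¹' (Metric.ball (bmap φ s) r ∩ gBdry φ) ⊆ Ioo (s - r) (s + r) := by
  intro t ⟨ht, _⟩
  rw [Metric.mem_ball, dist_eq_norm] at ht
  have := abs_sub_lt_iff.1 ((abs_sub_le_norm_bmap_sub φ s t).trans_lt ht)
  constructor <;> linarith

theorem Ioo_subset_preimage_ball_inter_gBdry (hφ : LipschitzWith L φ) (s r : ℝ) :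
    Ioo (s - r / √(1 + (L : ℝ) ^ 2)) (s + r / √(1 + (L : ℝ) ^ 2)) ⊆
      bmap φ ⁻¹' (Metric.ball (bmap φ s) r ∩ gBdry φ) := by
  intro t ht
  refine ⟨?_, rfl⟩
  have hK := zero_lt_one.trans_le (one_le_sqrt_one_add_sq (L : ℝ))
  have hts : |t - s| < r / √(1 + (L : ℝ) ^ 2) :=
    abs_sub_lt_iff.2 ⟨by linarith [ht.2], by linarith [ht.1]⟩
  rw [Metric.mem_ball, dist_eq_norm]
  calc ‖bmap φ t - bmap φ s‖ ≤ √(1 + (L : ℝ) ^ 2) * |t - s| := norm_bmap_sub_le hφ s t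
    _ < r := by rwa [lt_div_iff₀' hK] at hts

end Graph

section BallEstimates

variable {φ : ℝ → ℝ} {L : ℝ≥0}

theorem measurableSet_ball_inter_gBdry (hφ : Continuous φ) (x : ℂ) (r : ℝ) :
    MeasurableSet (Metric.ball x r ∩ gBdry φ) :=
  measurableSet_ball.inter
    (isClosed_eq Complex.continuous_im (hφ.comp Complex.continuous_re)).measurableSet

theorem sigmaW_ball_inter_gBdry_eq (hφ : Continuous φ) (ε s r : ℝ) :
    sigmaW φ ε (Metric.ball (bmap φ s) r ∩ gBdry φ) =
      sigmaWPullback φ ε (bmap φ ⁻¹' (Metric.ball (bmap φ s) r ∩ gBdry φ)) := by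
  rw [sigmaW_eq_map hφ, Measure.map_apply (continuous_bmap hφ).measurable
    (measurableSet_ball_inter_gBdry hφ _ _)]

theorem ofReal_le_sigmaW_ball_inter_gBdry (hφ : LipschitzWith L φ) (hφ0 : φ 0 = 0) (ε : ℝ)
    {x : ℂ} (hx : x ∈ gBdry φ) {r : ℝ} (hr : 0 < r) :
    ENNReal.ofReal (2 ^ (-|ε|) / 2 * √(1 + (L : ℝ) ^ 2) ^ (-|ε|) * √(1 + (L : ℝ) ^ 2) ^ (-|ε|) /
        √(1 + (L : ℝ) ^ 2) * (r * max ‖x‖ r ^ ε)) ≤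
      sigmaW φ ε (Metric.ball x r ∩ gBdry φ) := by
  obtain ⟨s, rfl⟩ : ∃ s, bmap φ s = x := ⟨x.re, Complex.ext rfl hx.symm⟩
  set K := √(1 + (L : ℝ) ^ 2)
  have hK : 1 ≤ K := one_le_sqrt_one_add_sq _
  have hK0 : 0 < K := zero_lt_one.trans_le hK
  have hmax : K ^ (-|ε|) * max ‖bmap φ s‖ r ^ ε ≤ max |s| (r / K) ^ ε :=
    rpow_neg_abs_mul_rpow_le hK (by positivity) (by positivity)
      (max_le_mul_max hK0.le (norm_bmap_le hφ hφ0 s) (by rw [mul_div_cancel₀ _ hK0.ne']))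
      (max_le_mul_max hK0.le
        ((abs_le_norm_bmap hφ0 s).trans (le_mul_of_one_le_left (by positivity) hK))
        ((div_le_self hr.le hK).trans (le_mul_of_one_le_left hr.le hK))) ε
  rw [sigmaW_ball_inter_gBdry_eq hφ.continuous]
  calc ENNReal.ofReal
        (2 ^ (-|ε|) / 2 * K ^ (-|ε|) * K ^ (-|ε|) / K * (r * max ‖bmap φ s‖ r ^ ε))
      ≤ ENNReal.ofReal (K ^ (-|ε|)) *
          ENNReal.ofReal (2 ^ (-|ε|) / 2 * (r / K * max |s| (r / K) ^ ε)) := by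
        rw [← ENNReal.ofReal_mul (by positivity)]
        refine ENNReal.ofReal_le_ofReal ?_
        calc 2 ^ (-|ε|) / 2 * K ^ (-|ε|) * K ^ (-|ε|) / K * (r * max ‖bmap φ s‖ r ^ ε)
            = K ^ (-|ε|) * (2 ^ (-|ε|) / 2 * (r / K * (K ^ (-|ε|) * max ‖bmap φ s‖ r ^ ε))) := by
              ring
          _ ≤ _ := by gcongr
    _ ≤ (ENNReal.ofReal (K ^ (-|ε|)) • absRpowVolume ε) (Ioo (s - r / K) (s + r / K)) := by
        rw [Measure.smul_apply, smul_eq_mul]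
        gcongr
        exact absRpowVolume.ofReal_le_Ioo ε s (by positivity)
    _ ≤ sigmaWPullback φ ε (Ioo (s - r / K) (s + r / K)) :=
        smul_absRpowVolume_le_sigmaWPullback hφ hφ0 ε _
    _ ≤ _ := measure_mono (Ioo_subset_preimage_ball_inter_gBdry hφ s r)

theorem sigmaW_ball_inter_gBdry_le_ofReal (hφ : LipschitzWith L φ) (hφ0 : φ 0 = 0) {ε : ℝ}
    (hε : -1 < ε) {x : ℂ} (hx : x ∈ gBdry φ) {r : ℝ} (hr : 0 < r) :
    sigmaW φ ε (Metric.ball x r ∩ gBdry φ) ≤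
      ENNReal.ofReal (√(1 + (L : ℝ) ^ 2) * √(1 + (L : ℝ) ^ 2) ^ |ε| *
        max (2 * 2 ^ |ε|) (6 * 3 ^ |ε| / (ε + 1)) * √(1 + (L : ℝ) ^ 2) ^ |ε| *
          (r * max ‖x‖ r ^ ε)) := by
  obtain ⟨s, rfl⟩ : ∃ s, bmap φ s = x := ⟨x.re, Complex.ext rfl hx.symm⟩
  set K := √(1 + (L : ℝ) ^ 2)
  have hK : 1 ≤ K := one_le_sqrt_one_add_sq _
  have hK0 : 0 < K := zero_lt_one.trans_le hK
  have hmax : max |s| r ^ ε ≤ K ^ |ε| * max ‖bmap φ s‖ r ^ ε :=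
    rpow_le_rpow_abs_mul_rpow hK (by positivity) (by positivity)
      (max_le_mul_max hK0.le
        ((abs_le_norm_bmap hφ0 s).trans (le_mul_of_one_le_left (by positivity) hK))
        (le_mul_of_one_le_left hr.le hK))
      (max_le_mul_max hK0.le (norm_bmap_le hφ hφ0 s) (le_mul_of_one_le_left hr.le hK)) ε
  rw [sigmaW_ball_inter_gBdry_eq hφ.continuous]
  calc sigmaWPullback φ ε (bmap φ ⁻¹' (Metric.ball (bmap φ s) r ∩ gBdry φ))
      ≤ sigmaWPullback φ ε (Ioo (s - r) (s + r)) :=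
        measure_mono (preimage_ball_inter_gBdry_subset_Ioo φ s r)
    _ ≤ (ENNReal.ofReal (K * K ^ |ε|) • absRpowVolume ε) (Ioo (s - r) (s + r)) :=
        sigmaWPullback_le_smul_absRpowVolume hφ hφ0 ε _
    _ ≤ ENNReal.ofReal (K * K ^ |ε|) *
          ENNReal.ofReal (max (2 * 2 ^ |ε|) (6 * 3 ^ |ε| / (ε + 1)) * (r * max |s| r ^ ε)) := by
        rw [Measure.smul_apply, smul_eq_mul]
        gcongr
        exact absRpowVolume.Ioo_le_ofReal hε s hr
    _ ≤ _ := by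
        rw [← ENNReal.ofReal_mul (by positivity)]
        refine ENNReal.ofReal_le_ofReal ?_
        calc K * K ^ |ε| * (max (2 * 2 ^ |ε|) (6 * 3 ^ |ε| / (ε + 1)) * (r * max |s| r ^ ε))
            ≤ K * K ^ |ε| * (max (2 * 2 ^ |ε|) (6 * 3 ^ |ε| / (ε + 1)) *
                (r * (K ^ |ε| * max ‖bmap φ s‖ r ^ ε))) := by gcongr
          _ = _ := by ring

end BallEstimates

theorem statement8_general (φ : ℝ → ℝ) (M : ℝ)
    (hφ : ∀ s t, |φ s - φ t| ≤ M * |s - t|) (hφ0 : φ 0 = 0)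
    (ε : ℝ) (hε : -1 < ε) :
    ∃ c C : ℝ, 0 < c ∧ c ≤ C ∧ ∀ x ∈ gBdry φ, ∀ r : ℝ, 0 < r →
      ENNReal.ofReal (c * (r * (max ‖x‖ r) ^ ε))
          ≤ sigmaW φ ε (Metric.ball x r ∩ gBdry φ) ∧
        sigmaW φ ε (Metric.ball x r ∩ gBdry φ)
          ≤ ENNReal.ofReal (C * (r * (max ‖x‖ r) ^ ε)) := by
  have hlip : LipschitzWith M.toNNReal φ :=
    LipschitzWith.of_dist_le' fun s t => by simpa only [Real.dist_eq] using hφ s t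
  have h0 : (0 : ℂ) ∈ gBdry φ := by simp [gBdry, hφ0]
  refine ⟨_, _, by positivity, ?_, fun x hx r hr =>
    ⟨ofReal_le_sigmaW_ball_inter_gBdry hlip hφ0 ε hx hr,
      sigmaW_ball_inter_gBdry_le_ofReal hlip hφ0 hε hx hr⟩⟩
  -- comparing the two bounds at `x = 0`, `r = 1` forces `c ≤ C`
  have h := (ofReal_le_sigmaW_ball_inter_gBdry hlip hφ0 ε h0 one_pos).trans
    (sigmaW_ball_inter_gBdry_le_ofReal hlip hφ0 hε h0 one_pos)
  simp only [norm_zero, zero_le_one, max_eq_right, Real.one_rpow, mul_one] at h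
  exact (ENNReal.ofReal_le_ofReal_iff'.1 h).resolve_right (not_le.2 (by positivity))

/-- for `ε > −1`, `σ_ε(Δ_r(x)) ≈ r · max(|x|, r)^ε` for all `x ∈ ∂Ω`, `r > 0`,
with comparability constants depending only on `ε` and `M`. -/
theorem statement8 (φ : ℝ → ℝ) (M : ℝ)
    (hφ : ∀ s t, |φ s - φ t| ≤ M * |s - t|) (hφ0 : φ 0 = 0) (hM0 : 0 ≤ M)
    (ε : ℝ) (hε : -1 < ε) :
    ∃ c C : ℝ, 0 < c ∧ c ≤ C ∧ ∀ x ∈ gBdry φ, ∀ r : ℝ, 0 < r →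
      ENNReal.ofReal (c * (r * (max ‖x‖ r) ^ ε))
          ≤ sigmaW φ ε (Metric.ball x r ∩ gBdry φ) ∧
        sigmaW φ ε (Metric.ball x r ∩ gBdry φ)
          ≤ ENNReal.ofReal (C * (r * (max ‖x‖ r) ^ ε)) :=
  statement8_general φ M hφ hφ0 ε hε
end
end

section
/- Let Ω, N, D be a standard Lipschitz graph domain for the mixed problem with Lipschitz constant M > 0, set β = arctan M, and assume β < π/4. Then for every ε with 2β/(π − 2β) < ε < 1 there exist β₀ = β₀(ε, M) with β < β₀ < (π − 2β)/2 and λ ∈ ℝ such that the vector field α(z) = (Re(e^{iλ} z^ε), Im(e^{iλ} z^ε)) satisfies −|x|^ε ≤ α(x)·ν(x) < −|x|^ε · sin(β₀ − β) for a.e. x ∈ N, and |x|^ε ≥ α(x)·ν(x) > |x|^ε · sin(β₀ − β) for a.e. x ∈ D. -/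
open MeasureTheory Filter Set
open scoped ENNReal Topology Real NNReal

noncomputable section

/-! Write `x = |x| e^{iθ}` with `θ = argB x` and let `ψ = arctan φ'(x₁)` be the angle of the
tangent; then `α·ν = -|x|^ε sin(λ + εθ - ψ)`. Since `φ` is `M`-Lipschitz with `φ 0 = 0`, both the
chord slope `x₂/x₁` and `φ'` have arctangent in `[-β, β]`, so `|θ| ≤ β` on `N`, `|θ - π| ≤ β` on `D`
and `|ψ| ≤ β`. With `λ = π - επ/2` the phase is `π - (επ/2 - εθ + ψ)` on `N` and
`π + (επ/2 + ε(θ - π) - ψ)` on `D`, and in both cases the inner angle lies in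
`(β₀ - β, π - (β₀ - β))` once `β < β₀ < ε(π - 2β)/2`, where `sin` exceeds `sin(β₀ - β)`.
The strict bound fails only at the vertex `0 ∈ N`, which is `σ`-null. -/

namespace Real

theorem sin_lt_sin_of_lt_of_lt_pi_sub {c y : ℝ} (hc : 0 ≤ c) (hcy : c < y) (hyc : y < π - c) :
    sin c < sin y := by
  have := pi_pos
  rcases le_or_gt y (π / 2) with hy | hy
  · exact strictMonoOn_sin ⟨by linarith, by linarith⟩ ⟨by linarith, hy⟩ hcy
  · rw [← sin_pi_sub y]
    exact strictMonoOn_sin ⟨by linarith, by linarith⟩ ⟨by linarith, by linarith⟩ (by linarith)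

theorem abs_arctan_le_arctan {u M : ℝ} (h : |u| ≤ M) : |arctan u| ≤ arctan M := by
  rw [abs_le] at h ⊢
  exact ⟨arctan_neg M ▸ arctan_strictMono.monotone h.1, arctan_strictMono.monotone h.2⟩

end Real

open Real

theorem tan_argB (x : ℂ) : tan (argB x) = x.im / x.re := by
  unfold argB
  split_ifs
  · simpa using (tan_periodic.nat_mul 2) x.arg ▸ Complex.tan_arg x
  · exact Complex.tan_arg x

theorem argB_of_re_pos {x : ℂ} (hx : 0 < x.re) : argB x = arctan (x.im / x.re) := by
  have harg : |x.arg| < π / 2 := Complex.abs_arg_lt_pi_div_two_iff.2 (Or.inl hx)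
  rw [abs_lt] at harg
  rw [← tan_argB, argB, if_neg harg.1.not_gt, arctan_tan harg.1 harg.2]

theorem argB_of_re_neg {x : ℂ} (hx : x.re < 0) : argB x = arctan (x.im / x.re) + π := by
  have harg : π / 2 < |x.arg| := not_le.1 (Complex.abs_arg_le_pi_div_two_iff.not.2 hx.not_ge)
  have hbounds : π / 2 < argB x ∧ argB x < 3 * π / 2 := by
    have := Complex.neg_pi_lt_arg x
    have := Complex.arg_le_pi x
    unfold argB
    split_ifs <;> constructor <;> cases abs_cases x.arg <;> linarith
  rw [← tan_argB, ← tan_periodic.sub_eq, arctan_tan (by linarith) (by linarith)]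
  ring

theorem nuVec_eq_sin_cos_arctan (φ : ℝ → ℝ) (x : ℂ) :
    nuVec φ x = ⟨sin (arctan (deriv φ x.re)), -cos (arctan (deriv φ x.re))⟩ := by
  apply Complex.ext <;>
    simp only [nuVec, Complex.real_smul, Complex.re_ofReal_mul, Complex.im_ofReal_mul, sin_arctan,
      cos_arctan] <;> ring

theorem exp_mul_cpowB (lam ε : ℝ) (x : ℂ) :
    Complex.exp (Complex.I * lam) * cpowB ε x
      = (‖x‖ ^ ε : ℝ) * Complex.exp ((lam + ε * argB x : ℝ) * Complex.I) := by
  rw [cpowB, mul_left_comm, ← Complex.exp_add]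
  push_cast
  ring_nf

theorem dotR_ofReal_mul_exp (r A ψ : ℝ) :
    dotR (r * Complex.exp (A * Complex.I)) ⟨sin ψ, -cos ψ⟩ = -(r * sin (A - ψ)) := by
  simp only [dotR, Complex.re_ofReal_mul, Complex.im_ofReal_mul, Complex.exp_ofReal_mul_I_re,
    Complex.exp_ofReal_mul_I_im, sin_sub]
  ring

theorem dotR_exp_mul_cpowB_nuVec (φ : ℝ → ℝ) (ε lam : ℝ) (x : ℂ) :
    dotR (Complex.exp (Complex.I * lam) * cpowB ε x) (nuVec φ x)
      = -(‖x‖ ^ ε * sin (lam + ε * argB x - arctan (deriv φ x.re))) := by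
  rw [exp_mul_cpowB, nuVec_eq_sin_cos_arctan, dotR_ofReal_mul_exp]

theorem sin_sub_lt_sin_phase {ε β β₀ θ ψ : ℝ} (hε0 : 0 ≤ ε) (hε1 : ε ≤ 1) (hββ₀ : β < β₀)
    (hβ₀ : β₀ < ε * (π - 2 * β) / 2) (hθ : |θ| ≤ β) (hψ : |ψ| ≤ β) :
    sin (β₀ - β) < sin (ε * π / 2 + ε * θ - ψ) := by
  rw [abs_le] at hθ hψ
  have hεθ : |ε * θ| ≤ ε * β := by
    rw [abs_mul, abs_of_nonneg hε0]; exact mul_le_mul_of_nonneg_left (abs_le.2 hθ) hε0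
  have hεπ : ε * π ≤ π := mul_le_of_le_one_left pi_pos.le hε1
  rw [abs_le] at hεθ
  exact sin_lt_sin_of_lt_of_lt_pi_sub (by linarith) (by linarith) (by linarith)

theorem abs_arctan_deriv_le {φ : ℝ → ℝ} {K : ℝ≥0} (hφ : LipschitzWith K φ) (t : ℝ) :
    |arctan (deriv φ t)| ≤ arctan K :=
  abs_arctan_le_arctan (norm_deriv_le_of_lipschitz (𝕜 := ℝ) hφ)

theorem abs_arctan_slope_le {φ : ℝ → ℝ} {K : ℝ≥0} (hφ : LipschitzWith K φ) (hφ0 : φ 0 = 0)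
    (t : ℝ) : |arctan (φ t / t)| ≤ arctan K := by
  refine abs_arctan_le_arctan ?_
  rw [abs_div]
  refine div_le_of_le_mul₀ (abs_nonneg t) K.2 ?_
  simpa [hφ0, Real.dist_eq] using hφ.dist_le_mul t 0

theorem MeasureTheory.Measure.nullSingletonClass_map_of_injective {α β : Type*}
    [MeasurableSpace α] [MeasurableSpace β] [MeasurableSingletonClass β] (μ : Measure α)
    [NullSingletonClass μ] {f : α → β} (hf : Function.Injective f) :
    NullSingletonClass (μ.map f) := by
  refine ⟨fun b => ?_⟩
  by_cases hfm : AEMeasurable f μ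
  · rw [Measure.map_apply_of_aemeasurable hfm (measurableSet_singleton b)]
    exact (Set.subsingleton_singleton.preimage hf).measure_zero μ
  · simp [Measure.map_of_not_aemeasurable hfm]

instance nullSingletonClass_sigma0 (φ : ℝ → ℝ) : NullSingletonClass (sigma0 φ) :=
  Measure.nullSingletonClass_map_of_injective _ fun _ _ h => congrArg Complex.re h

theorem mul_sin_bounds {r c y : ℝ} (hr : 0 < r) (h : sin c < sin y) :
    r * sin y ≤ r ∧ r * sin c < r * sin y :=
  ⟨mul_le_of_le_one_right hr.le (sin_le_one y), mul_lt_mul_of_pos_left h hr⟩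

section Boundary

variable {φ : ℝ → ℝ} {K : ℝ≥0} {ε β₀ : ℝ}

theorem dotR_bounds_of_mem_Nside (hφ : LipschitzWith K φ) (hφ0 : φ 0 = 0) (hε0 : 0 ≤ ε)
    (hε1 : ε ≤ 1) (hββ₀ : arctan K < β₀) (hβ₀ : β₀ < ε * (π - 2 * arctan K) / 2) {x : ℂ}
    (hx : x ∈ Nside φ) (hx0 : x ≠ 0) :
    -(‖x‖ ^ ε) ≤ dotR (Complex.exp (Complex.I * ↑(π - ε * π / 2)) * cpowB ε x) (nuVec φ x) ∧
      dotR (Complex.exp (Complex.I * ↑(π - ε * π / 2)) * cpowB ε x) (nuVec φ x)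
        < -(‖x‖ ^ ε * sin (β₀ - arctan K)) := by
  obtain ⟨him, hre⟩ := hx
  have hre : 0 < x.re := hre.lt_of_ne fun h => hx0 (Complex.ext h.symm (by simp [him, ← h, hφ0]))
  have hθ : |arctan (x.im / x.re)| ≤ arctan K := him ▸ abs_arctan_slope_le hφ hφ0 x.re
  set θ := arctan (x.im / x.re)
  set ψ := arctan (deriv φ x.re)
  have hsin : sin (β₀ - arctan K) < sin (ε * π / 2 + ε * -θ - -ψ) :=
    sin_sub_lt_sin_phase hε0 hε1 hββ₀ hβ₀ ((abs_neg θ).trans_le hθ)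
      ((abs_neg ψ).trans_le (abs_arctan_deriv_le hφ _))
  have hphase : π - ε * π / 2 + ε * θ - ψ = π - (ε * π / 2 + ε * -θ - -ψ) := by ring
  obtain ⟨h1, h2⟩ := mul_sin_bounds (rpow_pos_of_pos (norm_pos_iff.2 hx0) ε) hsin
  rw [dotR_exp_mul_cpowB_nuVec, argB_of_re_pos hre, hphase, sin_pi_sub]
  exact ⟨neg_le_neg h1, neg_lt_neg h2⟩

theorem dotR_bounds_of_mem_Dside (hφ : LipschitzWith K φ) (hφ0 : φ 0 = 0) (hε0 : 0 ≤ ε)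
    (hε1 : ε ≤ 1) (hββ₀ : arctan K < β₀) (hβ₀ : β₀ < ε * (π - 2 * arctan K) / 2) {x : ℂ}
    (hx : x ∈ Dside φ) :
    dotR (Complex.exp (Complex.I * ↑(π - ε * π / 2)) * cpowB ε x) (nuVec φ x) ≤ ‖x‖ ^ ε ∧
      ‖x‖ ^ ε * sin (β₀ - arctan K)
        < dotR (Complex.exp (Complex.I * ↑(π - ε * π / 2)) * cpowB ε x) (nuVec φ x) := by
  obtain ⟨him, hre⟩ := hx
  have hθ : |arctan (x.im / x.re)| ≤ arctan K := him ▸ abs_arctan_slope_le hφ hφ0 x.re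
  set θ := arctan (x.im / x.re)
  set ψ := arctan (deriv φ x.re)
  have hsin : sin (β₀ - arctan K) < sin (ε * π / 2 + ε * θ - ψ) :=
    sin_sub_lt_sin_phase hε0 hε1 hββ₀ hβ₀ hθ (abs_arctan_deriv_le hφ _)
  have hphase : π - ε * π / 2 + ε * (θ + π) - ψ = ε * π / 2 + ε * θ - ψ + π := by ring
  have hx0 : x ≠ 0 := fun h => by simp [h] at hre
  obtain ⟨h1, h2⟩ := mul_sin_bounds (rpow_pos_of_pos (norm_pos_iff.2 hx0) ε) hsin
  rw [dotR_exp_mul_cpowB_nuVec, argB_of_re_neg hre, hphase, sin_add_pi, mul_neg, neg_neg]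
  exact ⟨h1, h2⟩

end Boundary

theorem statement13_general (φ : ℝ → ℝ) (M : ℝ)
    (hφ : ∀ s t, |φ s - φ t| ≤ M * |s - t|) (hφ0 : φ 0 = 0)
    (ε : ℝ) (hε1 : 2 * Real.arctan M / (π - 2 * Real.arctan M) < ε) (hε2 : ε < 1) :
    ∃ β₀ lam : ℝ, Real.arctan M < β₀ ∧ β₀ < (π - 2 * Real.arctan M) / 2 ∧
      (∀ᵐ x ∂(sigma0 φ), x ∈ Nside φ →
        -(‖x‖ ^ ε)
            ≤ dotR (Complex.exp (Complex.I * lam) * cpowB ε x) (nuVec φ x) ∧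
          dotR (Complex.exp (Complex.I * lam) * cpowB ε x) (nuVec φ x)
            < -(‖x‖ ^ ε * Real.sin (β₀ - Real.arctan M))) ∧
      (∀ᵐ x ∂(sigma0 φ), x ∈ Dside φ →
        dotR (Complex.exp (Complex.I * lam) * cpowB ε x) (nuVec φ x)
            ≤ ‖x‖ ^ ε ∧
          ‖x‖ ^ ε * Real.sin (β₀ - Real.arctan M)
            < dotR (Complex.exp (Complex.I * lam) * cpowB ε x) (nuVec φ x)) := by
  have hM : 0 ≤ M := by simpa using (abs_nonneg _).trans (hφ 1 0)
  have hlip : LipschitzWith ⟨M, hM⟩ φ := .of_dist_le_mul fun s t => hφ s t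
  set β := arctan M
  have hπβ : 0 < π - 2 * β := by linarith [arctan_lt_pi_div_two M]
  have hε : 2 * β < ε * (π - 2 * β) := (div_lt_iff₀ hπβ).1 hε1
  have hε0 : 0 ≤ ε := by nlinarith [arctan_nonneg.2 hM]
  have hε1' : ε * (π - 2 * β) < π - 2 * β := mul_lt_of_lt_one_left hπβ hε2
  set β₀ := (β + ε * (π - 2 * β) / 2) / 2 with hβ₀def
  have hββ₀ : β < β₀ := by linarith
  have hβ₀ : β₀ < ε * (π - 2 * β) / 2 := by linarith
  refine ⟨β₀, π - ε * π / 2, hββ₀, by linarith, ?_, ?_⟩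
  · filter_upwards [Measure.ae_ne (sigma0 φ) 0] with x hx0 hx
    exact dotR_bounds_of_mem_Nside hlip hφ0 hε0 hε2.le hββ₀ hβ₀ hx hx0
  · exact ae_of_all _ fun x hx => dotR_bounds_of_mem_Dside hlip hφ0 hε0 hε2.le hββ₀ hβ₀ hx

/-- construction of the holomorphic vector field `α(z) = e^{iλ} z^ε` for the
mixed problem, with `α·ν` strictly negative (of size `|x|^ε`) on `N` and strictly positive
on `D`. -/
theorem statement13 (φ : ℝ → ℝ) (M : ℝ)
    (hφ : ∀ s t, |φ s - φ t| ≤ M * |s - t|) (hφ0 : φ 0 = 0) (hM : 0 < M)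
    (hβ : Real.arctan M < π / 4)
    (ε : ℝ) (hε1 : 2 * Real.arctan M / (π - 2 * Real.arctan M) < ε) (hε2 : ε < 1) :
    ∃ β₀ lam : ℝ, Real.arctan M < β₀ ∧ β₀ < (π - 2 * Real.arctan M) / 2 ∧
      (∀ᵐ x ∂(sigma0 φ), x ∈ Nside φ →
        -(‖x‖ ^ ε)
            ≤ dotR (Complex.exp (Complex.I * lam) * cpowB ε x) (nuVec φ x) ∧
          dotR (Complex.exp (Complex.I * lam) * cpowB ε x) (nuVec φ x)
            < -(‖x‖ ^ ε * Real.sin (β₀ - Real.arctan M))) ∧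
      (∀ᵐ x ∂(sigma0 φ), x ∈ Dside φ →
        dotR (Complex.exp (Complex.I * lam) * cpowB ε x) (nuVec φ x)
            ≤ ‖x‖ ^ ε ∧
          ‖x‖ ^ ε * Real.sin (β₀ - Real.arctan M)
            < dotR (Complex.exp (Complex.I * lam) * cpowB ε x) (nuVec φ x)) :=
  statement13_general φ M hφ hφ0 ε hε1 hε2
end
end
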